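/- For fixed p > 1, the function W(p,p') = V(p) − Q(p) − V(p') + Q(p') − (p−1)(exp(V(p)−V(p')) − 1)/p is strictly increasing in p' on (p, ∞), where V(p) = p·ln(p²/(p²−1)) and Q(p) = ∫_p^∞ (−V'(v)/v) dv. -/

import Mathlib

/-!
Since `Q' = V'/p`, the derivative of `W p` at `x` is
`-V'(x) * ((x - 1)/x - (p - 1)/p * exp (V p - V x))`.
The bound `log (1 + y) ≤ y` gives `V' < 0`, so positivity reduces to the strict monotonicity of
`V t + log ((t - 1)/t)`; by `log (1 + y) > y/(1 + y)` its derivative exceeds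
`1/t² - 1/(t(t + 1)) > 0`.
-/

open Real Set MeasureTheory

noncomputable def V (p : ℝ) : ℝ := p * Real.log (p ^ 2 / (p ^ 2 - 1))

noncomputable def Q (p : ℝ) : ℝ := ∫ v in Set.Ioi p, -(deriv V v) / v

noncomputable def W (p p' : ℝ) : ℝ :=
  V p - Q p - V p' + Q p' - (p - 1) * (Real.exp (V p - V p') - 1) / p

open Filter Topology

theorem hasDerivAt_integral_Ioi {E : Type*} [NormedAddCommGroup E] [NormedSpace ℝ E]
    [CompleteSpace E] {g : ℝ → E} {a x : ℝ} (hg : IntegrableOn g (Ioi a)) (hx : a < x)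
    (hgx : ContinuousAt g x) :
    HasDerivAt (fun u => ∫ v in Ioi u, g v) (-g x) x := by
  have hsplit : (fun u => ∫ v in Ioi u, g v) =ᶠ[𝓝 x]
      fun u => (∫ v in u..x, g v) + ∫ v in Ioi x, g v := by
    filter_upwards [Ioi_mem_nhds hx] with u hu
    exact (intervalIntegral.integral_interval_add_Ioi (hg.mono_set (Ioi_subset_Ioi hu.le))
      (hg.mono_set (Ioi_subset_Ioi hx.le))).symm
  refine HasDerivAt.congr_of_eventuallyEq ?_ hsplit
  exact (intervalIntegral.integral_hasDerivAt_left IntervalIntegrable.refl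
    ⟨Ioi a, Ioi_mem_nhds hx, hg.aestronglyMeasurable⟩ hgx).add_const _

lemma sq_sub_one_pos {x : ℝ} (hx : 1 < x) : 0 < x ^ 2 - 1 := by nlinarith

theorem hasDerivAt_V {x : ℝ} (hx : 1 < x) :
    HasDerivAt V (log (x ^ 2 / (x ^ 2 - 1)) - 2 / (x ^ 2 - 1)) x := by
  have h := sq_sub_one_pos hx
  have hsq : HasDerivAt (fun t : ℝ => t ^ 2) (2 * x) x := by simpa using hasDerivAt_pow 2 x
  have hquot := hsq.fun_div (hsq.sub_const 1) h.ne'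
  refine ((hasDerivAt_id' x).mul (hquot.log (div_pos (by positivity) h).ne')).congr_deriv ?_
  field_simp
  ring

theorem one_div_sq_lt_log_sq_div {x : ℝ} (hx : 1 < x) :
    1 / x ^ 2 < log (x ^ 2 / (x ^ 2 - 1)) := by
  have h := sq_sub_one_pos hx
  have hlt := log_lt_sub_one_of_pos (div_pos h (by positivity : 0 < x ^ 2))
    (div_ne_one_of_ne (by linarith))
  rw [← inv_div, log_inv, inv_div] at hlt
  have : (x ^ 2 - 1) / x ^ 2 - 1 = -(1 / x ^ 2) := by field_simp; ring
  linarith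

theorem log_sq_div_le_one_div {x : ℝ} (hx : 1 < x) :
    log (x ^ 2 / (x ^ 2 - 1)) ≤ 1 / (x ^ 2 - 1) := by
  have h := sq_sub_one_pos hx
  have hle := log_le_sub_one_of_pos (div_pos (by positivity : 0 < x ^ 2) h)
  have : x ^ 2 / (x ^ 2 - 1) - 1 = 1 / (x ^ 2 - 1) := by field_simp; ring
  linarith

theorem deriv_V {x : ℝ} (hx : 1 < x) :
    deriv V x = log (x ^ 2 / (x ^ 2 - 1)) - 2 / (x ^ 2 - 1) :=
  (hasDerivAt_V hx).deriv

theorem deriv_V_neg {x : ℝ} (hx : 1 < x) : deriv V x < 0 := by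
  have h := sq_sub_one_pos hx
  have : 1 / (x ^ 2 - 1) < 2 / (x ^ 2 - 1) := by gcongr; norm_num
  linarith [deriv_V hx, log_sq_div_le_one_div hx]

theorem neg_deriv_V_lt {x : ℝ} (hx : 1 < x) : -deriv V x < 2 / (x ^ 2 - 1) := by
  have : 0 < 1 / x ^ 2 := by positivity
  linarith [deriv_V hx, one_div_sq_lt_log_sq_div hx]

theorem continuousOn_deriv_V : ContinuousOn (deriv V) (Ioi 1) := by
  refine ContinuousOn.congr ?_ fun x hx => deriv_V hx
  have hden : ∀ x ∈ Ioi (1 : ℝ), x ^ 2 - 1 ≠ 0 := fun x hx => (sq_sub_one_pos hx).ne'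
  refine ContinuousOn.sub ?_ (continuousOn_const.div (by fun_prop) hden)
  exact ((continuousOn_pow 2).div₀ (by fun_prop) hden).log
    fun x hx => (div_pos (pow_pos (zero_lt_one.trans hx) 2) (sq_sub_one_pos hx)).ne'

theorem continuousOn_neg_deriv_V_div : ContinuousOn (fun v => -deriv V v / v) (Ioi 1) :=
  continuousOn_deriv_V.neg.div continuousOn_id fun _ hv => (zero_lt_one.trans hv).ne'

theorem integrableOn_neg_deriv_V_div {c : ℝ} (hc : 1 < c) :
    IntegrableOn (fun v => -deriv V v / v) (Ioi c) := by
  have hc0 : 0 < c := zero_lt_one.trans hc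
  have hc1 := sq_sub_one_pos hc
  have hmajorant := (integrableOn_Ioi_rpow_of_lt (by norm_num : (-3 : ℝ) < -1) hc0).const_mul
    (2 * c ^ 2 / (c ^ 2 - 1))
  have hmeas := (continuousOn_neg_deriv_V_div.mono (Ioi_subset_Ioi hc.le)).aestronglyMeasurable
    (μ := volume) measurableSet_Ioi
  refine Integrable.mono' hmajorant hmeas
    ((ae_restrict_iff' measurableSet_Ioi).2 (Eventually.of_forall fun v hcv => ?_))
  have hv : 1 < v := hc.trans hcv
  have hv0 : 0 < v := zero_lt_one.trans hv
  have hv1 := sq_sub_one_pos hv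
  rw [norm_of_nonneg (div_nonneg (neg_nonneg.2 (deriv_V_neg hv).le) hv0.le), rpow_neg hv0.le,
    show (3 : ℝ) = (3 : ℕ) by norm_num, rpow_natCast]
  calc -deriv V v / v ≤ 2 / (v ^ 2 - 1) / v := by gcongr; exact (neg_deriv_V_lt hv).le
    _ ≤ 2 * c ^ 2 / ((c ^ 2 - 1) * v ^ 3) := by
      rw [div_div, div_le_div_iff₀ (by positivity) (by positivity)]
      nlinarith [mul_le_mul_of_nonneg_left (pow_le_pow_left₀ hc0.le (le_of_lt hcv) 2) hv0.le]
    _ = 2 * c ^ 2 / (c ^ 2 - 1) * (v ^ 3)⁻¹ := by field_simp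

theorem hasDerivAt_Q {x : ℝ} (hx : 1 < x) : HasDerivAt Q (deriv V x / x) x := by
  have ha : 1 < (1 + x) / 2 := by linarith
  exact (hasDerivAt_integral_Ioi (integrableOn_neg_deriv_V_div ha) (by linarith)
    (continuousOn_neg_deriv_V_div.continuousAt (Ioi_mem_nhds hx))).congr_deriv (by ring)

theorem strictMonoOn_V_add_log : StrictMonoOn (fun t => V t + log (t - 1) - log t) (Ioi 1) := by
  have hderiv : ∀ t ∈ Ioi (1 : ℝ), HasDerivAt (fun t => V t + log (t - 1) - log t)
      (deriv V t + 1 / (t - 1) - t⁻¹) t := fun t (ht : 1 < t) =>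
    ((hasDerivAt_V ht).differentiableAt.hasDerivAt.add
      (((hasDerivAt_id' t).sub_const 1).log (by linarith))).sub (hasDerivAt_log (by linarith))
  refine strictMonoOn_of_deriv_pos (convex_Ioi 1)
    (fun t ht => (hderiv t ht).continuousAt.continuousWithinAt) fun t ht => ?_
  rw [interior_Ioi] at ht
  have ht' : 1 < t := ht
  rw [(hderiv t ht).deriv, deriv_V ht']
  have key : 1 / t ^ 2 - 2 / (t ^ 2 - 1) + 1 / (t - 1) - t⁻¹ =
      1 / t ^ 2 - 1 / (t * (t + 1)) := by
    have := sq_sub_one_pos ht'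
    have : t - 1 ≠ 0 := by linarith
    field_simp
    ring
  have : 1 / (t * (t + 1)) < 1 / t ^ 2 := by
    gcongr
    nlinarith
  linarith [one_div_sq_lt_log_sq_div ht']

theorem sub_one_div_mul_exp_V_sub_lt {p x : ℝ} (hp : 1 < p) (hpx : p < x) :
    (p - 1) / p * exp (V p - V x) < (x - 1) / x := by
  have hx : 1 < x := hp.trans hpx
  have hexp : exp (V p) * (p - 1) / p < exp (V x) * (x - 1) / x := by
    simpa only [exp_sub, exp_add, exp_log (sub_pos.2 hp), exp_log (sub_pos.2 hx),
      exp_log (zero_lt_one.trans hp), exp_log (zero_lt_one.trans hx)]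
      using exp_lt_exp.2 (strictMonoOn_V_add_log hp hx hpx)
  calc (p - 1) / p * exp (V p - V x) = exp (V p) * (p - 1) / p / exp (V x) := by
        rw [exp_sub]; ring
    _ < exp (V x) * (x - 1) / x / exp (V x) := by gcongr
    _ = (x - 1) / x := by field_simp

theorem hasDerivAt_W (p : ℝ) {x : ℝ} (hx : 1 < x) :
    HasDerivAt (W p) (-deriv V x * ((x - 1) / x - (p - 1) / p * exp (V p - V x))) x := by
  have hV : HasDerivAt V (deriv V x) x := (hasDerivAt_V hx).differentiableAt.hasDerivAt
  refine (((hV.const_sub (V p - Q p)).add (hasDerivAt_Q hx)).sub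
    ((((hV.const_sub (V p)).exp.sub_const 1).const_mul (p - 1)).div_const p)).congr_deriv ?_
  rw [sub_div, div_self (by linarith)]
  ring

theorem stmt_12 (p : ℝ) (hp : 1 < p) : StrictMonoOn (W p) (Set.Ioi p) := by
  have hW : ∀ x ∈ Ioi p, HasDerivAt (W p) _ x :=
    fun x (hx : p < x) => hasDerivAt_W p (hp.trans hx)
  refine strictMonoOn_of_deriv_pos (convex_Ioi p)
    (fun x hx => (hW x hx).continuousAt.continuousWithinAt) fun x hx => ?_
  rw [interior_Ioi] at hx
  rw [(hW x hx).deriv]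
  exact mul_pos (neg_pos.2 (deriv_V_neg (hp.trans hx)))
    (sub_pos.2 (sub_one_div_mul_exp_V_sub_lt hp hx))
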